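/- arXiv:math/0205180 — 4 statements merged into one kernel-verified Lean document; each statement's English description precedes it below -/
import Mathlib

section
/- Strong spectral stability of Burgers shock profiles (Proposition 1.3): For every ε > 0 and every λ ∈ ℂ with Re λ ≥ 0 and λ ≠ 0, the only twice continuously differentiable function w : ℝ → ℂ with w and w' square-integrable on ℝ that satisfies w''(x) = (d/dx)( ū^ε(x) w(x) ) + λ w(x) for all x ∈ ℝ is w ≡ 0. -/
/-!
Put `W = λ⁻¹ (w' - ū w)`. The equation becomes the first-order system `W' = w`,
`w' = λ W + ū w`, and `W ∈ L²` because `ū` is bounded. The function `v = ‖W‖²` satisfies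
`v'' - ū v' = 2 (Re λ ‖W‖² + ‖w‖²) ≥ 0`, so `(v' cosh² (ε x / 2))' ≥ 0`: once `v'` is
nonnegative it stays so. Hence from any point `a` the function `v` is monotone on a half-line
and stays `≥ v a` there, which an integrable function can only do if `v a = 0`.
So `W = 0` and `w = W' = 0`.
-/

open MeasureTheory

/-- The Burgers viscous shock profile of amplitude `ε`. -/
noncomputable def burgersProfile (ε : ℝ) (x : ℝ) : ℝ := -ε * Real.tanh (ε * x / 2)

open Real

theorem eq_zero_of_integrable_of_deriv_nonneg_persists {v v' : ℝ → ℝ}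
    (hv : ∀ x, HasDerivAt v (v' x) x) (hv_nonneg : 0 ≤ v) (hv_int : Integrable v)
    (hpersist : ∀ a b, a ≤ b → 0 ≤ v' a → 0 ≤ v' b) : v = 0 := by
  funext a
  by_contra hva
  have hpos : 0 < v a := (hv_nonneg a).lt_of_ne (Ne.symm hva)
  have hcont : ContinuousOn v Set.univ := fun x _ => (hv x).continuousAt.continuousWithinAt
  obtain ⟨s, hs_top, hs_ge⟩ : ∃ s : Set ℝ, volume s = ⊤ ∧ ∀ x ∈ s, v a ≤ v x := by
    rcases le_or_gt 0 (v' a) with ha | ha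
    · have hmono : MonotoneOn v (Set.Ici a) :=
        monotoneOn_of_hasDerivWithinAt_nonneg (convex_Ici a) (hcont.mono (Set.subset_univ _))
          (fun x _ => (hv x).hasDerivWithinAt)
          (fun x hx => hpersist a x (interior_subset hx) ha)
      exact ⟨Set.Ici a, by simp, fun x hx => hmono Set.self_mem_Ici hx hx⟩
    · have hanti : AntitoneOn v (Set.Iic a) :=
        antitoneOn_of_hasDerivWithinAt_nonpos (convex_Iic a) (hcont.mono (Set.subset_univ _))
          (fun x _ => (hv x).hasDerivWithinAt)
          (fun x hx => not_lt.1 fun hx' =>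
            (hpersist x a (Set.mem_Iic.1 (interior_subset hx)) hx'.le).not_gt ha)
      exact ⟨Set.Iic a, by simp, fun x hx => hanti hx Set.self_mem_Iic hx⟩
  exact ((measure_mono hs_ge).trans_lt (hv_int.measure_ge_lt_top hpos)).ne hs_top

theorem deriv_nonneg_persists_of_integrating_factor {u ρ f f' : ℝ → ℝ}
    (hf : ∀ x, HasDerivAt f (f' x) x) (hρ : ∀ x, HasDerivAt ρ (-u x * ρ x) x)
    (hρ_pos : ∀ x, 0 < ρ x) (hineq : ∀ x, u x * f x ≤ f' x) {a b : ℝ} (hab : a ≤ b)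
    (ha : 0 ≤ f a) : 0 ≤ f b := by
  have hmono : Monotone fun x => f x * ρ x := by
    refine monotone_of_hasDerivAt_nonneg (fun x => (hf x).mul (hρ x)) fun x => ?_
    have : f' x * ρ x + f x * (-u x * ρ x) = ρ x * (f' x - u x * f x) := by ring
    rw [Pi.zero_apply, this]
    exact mul_nonneg (hρ_pos x).le (sub_nonneg.2 (hineq x))
  exact nonneg_of_mul_nonneg_left ((mul_nonneg ha (hρ_pos a).le).trans (hmono hab)) (hρ_pos b)

theorem eq_zero_of_memLp_two_of_hasDerivAt_system {u ρ : ℝ → ℝ} {lam : ℂ} {w W : ℝ → ℂ}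
    (hre : 0 ≤ lam.re) (hρ : ∀ x, HasDerivAt ρ (-u x * ρ x) x) (hρ_pos : ∀ x, 0 < ρ x)
    (hW : ∀ x, HasDerivAt W (w x) x) (hw : ∀ x, HasDerivAt w (lam * W x + u x * w x) x)
    (hWL2 : MemLp W 2 volume) : W = 0 := by
  have hv : ∀ x, HasDerivAt (‖W ·‖ ^ 2) (2 * inner ℝ (W x) (w x)) x := fun x => (hW x).norm_sq
  have hv' : ∀ x, HasDerivAt (fun y => 2 * inner ℝ (W y) (w y))
      (2 * (inner ℝ (W x) (lam * W x + u x * w x) + inner ℝ (w x) (w x))) x :=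
    fun x => ((hW x).inner ℝ (hw x)).const_mul 2
  have hineq : ∀ x, u x * (2 * inner ℝ (W x) (w x))
      ≤ 2 * (inner ℝ (W x) (lam * W x + u x * w x) + inner ℝ (w x) (w x)) := by
    intro x
    simp only [Complex.inner, Complex.mul_re, Complex.add_re, Complex.add_im, Complex.conj_re,
      Complex.conj_im, Complex.mul_im, Complex.ofReal_re, Complex.ofReal_im]
    nlinarith [mul_nonneg hre (add_nonneg (sq_nonneg (W x).re) (sq_nonneg (W x).im)),
      sq_nonneg (w x).re, sq_nonneg (w x).im]
  have hv0 := eq_zero_of_integrable_of_deriv_nonneg_persists hv (fun x => by positivity)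
    (hWL2.integrable_norm_pow two_ne_zero)
    (fun a b hab => deriv_nonneg_persists_of_integrating_factor hv' hρ hρ_pos hineq hab)
  funext x
  simpa using congrFun hv0 x

lemma differentiable_burgersProfile (ε : ℝ) : Differentiable ℝ (burgersProfile ε) := by
  have h : burgersProfile ε = fun x => -ε * (sinh (ε * x / 2) / cosh (ε * x / 2)) := by
    funext x; rw [burgersProfile, tanh_eq_sinh_div_cosh]
  rw [h]
  fun_prop (disch := exact fun x => (cosh_pos _).ne')

lemma abs_burgersProfile_le (ε x : ℝ) : |burgersProfile ε x| ≤ |ε| := by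
  rw [burgersProfile, abs_mul, abs_neg]
  exact mul_le_of_le_one_right (abs_nonneg ε) (abs_tanh_lt_one _).le

lemma MeasureTheory.MemLp.burgersProfile_mul {p : ENNReal} {w : ℝ → ℂ} (ε : ℝ)
    (hw : MemLp w p volume) :
    MemLp (fun x => (burgersProfile ε x : ℂ) * w x) p volume := by
  have hu : Continuous fun x => (burgersProfile ε x : ℂ) :=
    Complex.continuous_ofReal.comp (differentiable_burgersProfile ε).continuous
  refine hw.of_le_mul (c := |ε|) (hu.aestronglyMeasurable.mul hw.aestronglyMeasurable)
    (Filter.Eventually.of_forall fun x => ?_)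
  rw [norm_mul, Complex.norm_real, Real.norm_eq_abs]
  exact mul_le_mul_of_nonneg_right (abs_burgersProfile_le ε x) (norm_nonneg _)

-- `cosh² (ε x / 2) = exp (-∫ ū^ε)` is the integrating factor of `f ↦ f' - ū^ε f`.
lemma hasDerivAt_cosh_sq_burgersProfile (ε x : ℝ) :
    HasDerivAt (fun y => cosh (ε * y / 2) ^ 2) (-burgersProfile ε x * cosh (ε * x / 2) ^ 2) x := by
  refine ((((hasDerivAt_id' x).const_mul ε).div_const 2).cosh.fun_pow 2).congr_deriv ?_
  rw [burgersProfile, tanh_eq_sinh_div_cosh]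
  field_simp
  ring

theorem burgers_strong_spectral_stability_general
    (ε : ℝ)
    (lam : ℂ) (hre : 0 ≤ lam.re) (hlam : lam ≠ 0)
    (w : ℝ → ℂ) (hw : ContDiff ℝ 2 w)
    (hwL2 : MemLp w 2 volume) (hw'L2 : MemLp (deriv w) 2 volume)
    (heq : ∀ x : ℝ,
      deriv (deriv w) x
        = deriv (fun y => (burgersProfile ε y : ℂ) * w y) x + lam * w x) :
    w = 0 := by
  set u := burgersProfile ε
  set W : ℝ → ℂ := fun x => lam⁻¹ * (deriv w x - u x * w x)
  have hw_diff : Differentiable ℝ w := hw.differentiable (by norm_num)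
  have huw_diff : Differentiable ℝ fun y => (u y : ℂ) * w y :=
    (Complex.ofRealCLM.differentiable.comp (differentiable_burgersProfile ε)).mul hw_diff
  have hW : ∀ x, HasDerivAt W (w x) x := fun x =>
    (((hw.differentiable_deriv_two x).hasDerivAt.sub (huw_diff x).hasDerivAt).const_mul
      lam⁻¹).congr_deriv (by rw [heq x, add_sub_cancel_left, inv_mul_cancel_left₀ hlam])
  have hw' : ∀ x, HasDerivAt w (lam * W x + u x * w x) x := fun x =>
    (hw_diff x).hasDerivAt.congr_deriv (by rw [mul_inv_cancel_left₀ hlam, sub_add_cancel])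
  have hW0 : W = 0 := eq_zero_of_memLp_two_of_hasDerivAt_system hre
    (hasDerivAt_cosh_sq_burgersProfile ε) (fun x => pow_pos (cosh_pos _) 2) hW hw'
    ((hw'L2.sub (hwL2.burgersProfile_mul ε)).const_mul lam⁻¹)
  funext x
  exact (hW x).unique (by rw [hW0]; exact hasDerivAt_const x (0 : ℂ))

/-- **Strong spectral stability of Burgers shock profiles** (Proposition 1.3):
for every `ε > 0` and every `λ` with `Re λ ≥ 0`, `λ ≠ 0`, the only `C²` solution
`w` of `w'' = (ū^ε w)' + λ w` with `w, w'` square integrable is `w ≡ 0`. -/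
theorem burgers_strong_spectral_stability
    (ε : ℝ) (hε : 0 < ε)
    (lam : ℂ) (hre : 0 ≤ lam.re) (hlam : lam ≠ 0)
    (w : ℝ → ℂ) (hw : ContDiff ℝ 2 w)
    (hwL2 : MemLp w 2 volume) (hw'L2 : MemLp (deriv w) 2 volume)
    (heq : ∀ x : ℝ,
      deriv (deriv w) x
        = deriv (fun y => (burgersProfile ε y : ℂ) * w y) x + lam * w x) :
    w = 0 :=
  burgers_strong_spectral_stability_general ε lam hre hlam w hw hwL2 hw'L2 heq
end

section
/- Invertibility of the transverse symbol (step in the proof of Proposition 5.3): Let θ > 0 and let b₁, b₂ be real numbers with b₁ ≥ θ and b₂ ≥ 0; set B := diag(b₁, b₂) and A² := [[0,1],[1,0]]. Then for every ξ₂ ∈ ℝ and every λ ∈ ℂ with Re λ ≥ 0 and (ξ₂, λ) ≠ (0, 0), the complex 2×2 matrix λ I + iξ₂ A² + ξ₂² B is invertible. -/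
open Matrix

/-- **Invertibility of the transverse symbol** (step in the proof of Proposition 5.3):
for `b₁ ≥ θ > 0`, `b₂ ≥ 0`, `B = diag(b₁,b₂)`, `A² = [[0,1],[1,0]]`, the symbol
`λI + iξ₂A² + ξ₂²B` is invertible whenever `Re λ ≥ 0` and `(ξ₂, λ) ≠ (0,0)`. -/
theorem transverse_symbol_invertible
    (θ b₁ b₂ : ℝ) (hθ : 0 < θ) (hb₁ : θ ≤ b₁) (hb₂ : 0 ≤ b₂)
    (ξ₂ : ℝ) (lam : ℂ) (hre : 0 ≤ lam.re) (hne : ¬ (ξ₂ = 0 ∧ lam = 0)) :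
    IsUnit
      (lam • (1 : Matrix (Fin 2) (Fin 2) ℂ)
        + (Complex.I * (ξ₂ : ℂ)) • (!![0, 1; 1, 0] : Matrix (Fin 2) (Fin 2) ℂ)
        + ((ξ₂ : ℂ) ^ 2) • (Matrix.diagonal ![(b₁ : ℂ), (b₂ : ℂ)])) := by
  rw [Matrix.isUnit_iff_isUnit_det]
  have hM : (lam • (1 : Matrix (Fin 2) (Fin 2) ℂ)
        + (Complex.I * (ξ₂ : ℂ)) • (!![0, 1; 1, 0] : Matrix (Fin 2) (Fin 2) ℂ)
        + ((ξ₂ : ℂ) ^ 2) • (Matrix.diagonal ![(b₁ : ℂ), (b₂ : ℂ)]))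
      = !![lam + (ξ₂:ℂ)^2*b₁, Complex.I*ξ₂; Complex.I*ξ₂, lam + (ξ₂:ℂ)^2*b₂] := by
    ext i j
    fin_cases i <;> fin_cases j <;>
      simp [Matrix.one_apply, Matrix.diagonal]
  rw [hM, Matrix.det_fin_two_of, isUnit_iff_ne_zero]
  intro h
  have h' : (lam + ((ξ₂^2*b₁ : ℝ):ℂ)) * (lam + ((ξ₂^2*b₂ : ℝ):ℂ)) + ((ξ₂^2 : ℝ):ℂ) = 0 := by
    push_cast
    linear_combination h + (ξ₂:ℂ)^2 * Complex.I_sq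
  set x := lam.re with hx
  set y := lam.im with hy
  simp only [Complex.ext_iff, Complex.add_re, Complex.add_im, Complex.mul_re,
    Complex.mul_im, Complex.ofReal_re, Complex.ofReal_im, Complex.zero_re,
    Complex.zero_im] at h'
  obtain ⟨hR, hI⟩ := h'
  push_neg at hne
  rcases eq_or_ne ξ₂ 0 with hξ | hξ
  · have hlam := hne hξ
    have hxy : x ≠ 0 ∨ y ≠ 0 := by
      by_contra hc
      push_neg at hc
      exact hlam (Complex.ext hc.1 hc.2)
    subst hξ
    norm_num at hR hI
    have hxy0 : x * y = 0 := by linarith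
    rcases mul_eq_zero.mp hxy0 with h0 | h0 <;> rcases hxy with h1 | h1 <;>
      first
        | exact h1 h0
        | (exfalso; apply h1; nlinarith [sq_nonneg x, sq_nonneg y])
  · have ha : θ * ξ₂^2 ≤ ξ₂^2 * b₁ := by nlinarith [sq_nonneg ξ₂]
    have hξ2 : 0 < ξ₂^2 := by positivity
    have hy0 : y = 0 := by
      have hpos : 0 < (x + ξ₂^2*b₁) + (x + ξ₂^2*b₂) := by nlinarith
      nlinarith [sq_nonneg y, mul_self_nonneg y]
    have him : lam.im = 0 := hy.symm.trans hy0
    rw [him] at hR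
    have hre' : 0 ≤ lam.re := hre
    have h1 : 0 < lam.re + ξ₂^2*b₁ := by nlinarith
    have h2 : 0 ≤ lam.re + ξ₂^2*b₂ := by nlinarith [mul_nonneg hξ2.le hb₂]
    nlinarith [mul_nonneg h1.le h2]
end

section
/- Zero-mass property of generalized eigenfunctions of the coupled Burgers–linear degenerate model (equation (zeromass) in the proof of Proposition 5.3): Let ξ₂ ∈ ℝ and λ ∈ ℂ with Re λ ≥ 0 and (ξ₂, λ) ≠ (0, 0). Suppose w : ℝ → ℂ² is twice continuously differentiable, each component of w is integrable on ℝ, w(x) → 0 and w'(x) → 0 as x → ±∞, and w satisfies (λ I + iξ₂ A² + ξ₂² B²²) w + (A¹ w)' + iξ₂ (B¹² + B²¹) w' = B¹¹ w'' for all x ∈ ℝ. Then (λ I + iξ₂ A² + ξ₂² B²²) ∫_ℝ w(x) dx = 0, and consequently ∫_ℝ w(x) dx = 0. -/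
open MeasureTheory Matrix Filter Topology

/-!
Integrating the equation over `ℝ`, every term except `M w`, with `M = λ I + iξ₂ A² + ξ₂² B²²`,
is the derivative of a quantity vanishing at `±∞` (the drift `A¹` is bounded), so `M ∫ w = 0`.
As `B²²` is diagonal, `det M = (λ + ξ₂² b)(λ + ξ₂² c) + ξ₂²` with `b ≥ θ > 0` and `c ≥ 0`
(parabolicity at `ξ = (0, 1)`). If `ξ₂ ≠ 0`, the imaginary part of `det M = 0` forces `λ` real,
and then its real part is positive; if `ξ₂ = 0`, `det M = λ² ≠ 0`. Hence `∫ w = 0`.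
-/

@[fun_prop]
theorem Real.differentiable_tanh : Differentiable ℝ Real.tanh := by
  rw [show Real.tanh = fun t => Real.sinh t / Real.cosh t from
    funext Real.tanh_eq_sinh_div_cosh]
  exact Real.differentiable_sinh.div Real.differentiable_cosh fun t => (Real.cosh_pos t).ne'

theorem abs_mul_tanh_le (c t : ℝ) : |c * Real.tanh t| ≤ |c| := by
  rw [abs_mul]
  exact mul_le_of_le_one_right (abs_nonneg c) (Real.abs_tanh_lt_one t).le

section MatrixCalculus

variable {𝕜 : Type*} [NontriviallyNormedField 𝕜] {𝔸 : Type*} [NormedCommRing 𝔸]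
  [NormedAlgebra 𝕜 𝔸] {m n : Type*} [Fintype n]

theorem HasDerivAt.const_mulVec (P : Matrix m n 𝔸) {f : 𝕜 → n → 𝔸} {f' : n → 𝔸} {x : 𝕜}
    (hf : HasDerivAt f f' x) : HasDerivAt (fun y => P *ᵥ f y) (P *ᵥ f') x :=
  hasDerivAt_pi.2 fun i => HasDerivAt.fun_sum fun j _ => (hasDerivAt_pi.1 hf j).const_mul (P i j)

theorem Differentiable.diagonal_mulVec [DecidableEq n] {d f : 𝕜 → n → 𝔸}
    (hd : ∀ i, Differentiable 𝕜 (fun y => d y i)) (hf : Differentiable 𝕜 f) :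
    Differentiable 𝕜 (fun y => diagonal (d y) *ᵥ f y) := by
  refine differentiable_pi.2 fun i => ?_
  simp only [mulVec_diagonal]
  exact (hd i).mul (differentiable_pi.1 hf i)

end MatrixCalculus

theorem Filter.Tendsto.diagonal_mulVec_zero {ι α n : Type*} [NormedRing α] [Fintype n]
    [DecidableEq n] {l : Filter ι} {d f : ι → n → α}
    (hd : ∀ i, IsBoundedUnder (· ≤ ·) l (fun y => ‖d y i‖)) (hf : Tendsto f l (𝓝 0)) :
    Tendsto (fun y => diagonal (d y) *ᵥ f y) l (𝓝 0) := by
  refine tendsto_pi_nhds.2 fun i => ?_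
  simp only [mulVec_diagonal, Pi.zero_apply]
  exact isBoundedUnder_le_mul_tendsto_zero (hd i) (tendsto_pi_nhds.1 hf i)

theorem Filter.Tendsto.const_mulVec_zero {ι α m n : Type*} [NonUnitalNonAssocSemiring α]
    [TopologicalSpace α] [IsTopologicalSemiring α] [Fintype n] {l : Filter ι} (P : Matrix m n α)
    {f : ι → n → α} (hf : Tendsto f l (𝓝 0)) :
    Tendsto (fun y => P *ᵥ f y) l (𝓝 0) := by
  simpa [Function.comp_def] using ((continuous_const.matrix_mulVec continuous_id).tendsto 0).comp hf

theorem integral_mulVec {X 𝕜 m n : Type*} [MeasurableSpace X] {μ : Measure X} [RCLike 𝕜]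
    [Fintype m] [Fintype n] [DecidableEq n] (M : Matrix m n 𝕜) {f : X → n → 𝕜}
    (hf : Integrable f μ) :
    ∫ x, M *ᵥ f x ∂μ = M *ᵥ ∫ x, f x ∂μ :=
  (LinearMap.toContinuousLinearMap (toLin' M)).integral_comp_comm hf

theorem Complex.add_mul_add_add_ne_zero {lam : ℂ} {s t r : ℝ} (hre : 0 ≤ lam.re) (hs : 0 < s)
    (ht : 0 ≤ t) (hr : 0 < r) : (lam + s) * (lam + t) + r ≠ 0 := by
  intro h
  have hre' := congrArg Complex.re h
  have him' := congrArg Complex.im h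
  simp only [add_re, add_im, mul_re, mul_im, ofReal_re, ofReal_im, zero_re, zero_im,
    add_zero] at hre' him'
  have him0 : lam.im = 0 := by
    have : lam.im * (2 * lam.re + s + t) = 0 := by linarith
    exact (mul_eq_zero.1 this).resolve_right (by linarith)
  rw [him0] at hre'
  nlinarith [mul_nonneg (add_nonneg hre hs.le) (add_nonneg hre ht)]

theorem det_symbol {D : Matrix (Fin 2) (Fin 2) ℝ} (hD : D.IsDiag) (lam : ℂ) (ξ : ℝ) :
    (lam • (1 : Matrix (Fin 2) (Fin 2) ℂ) + (Complex.I * ξ) • !![0, 1; 1, 0]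
      + ((ξ : ℂ) ^ 2) • D.map Complex.ofReal).det
      = (lam + ξ ^ 2 * D 0 0) * (lam + ξ ^ 2 * D 1 1) + ξ ^ 2 := by
  rw [det_fin_two]
  simp [hD (show (0 : Fin 2) ≠ 1 by decide), hD (show (1 : Fin 2) ≠ 0 by decide)]
  linear_combination (-(ξ : ℂ) ^ 2) * Complex.I_sq

theorem det_symbol_ne_zero {D : Matrix (Fin 2) (Fin 2) ℝ} (hD : D.IsDiag) (hD0 : 0 < D 0 0)
    (hD1 : 0 ≤ D 1 1) {lam : ℂ} {ξ : ℝ} (hre : 0 ≤ lam.re) (hne : ¬ (ξ = 0 ∧ lam = 0)) :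
    (lam • (1 : Matrix (Fin 2) (Fin 2) ℂ) + (Complex.I * ξ) • !![0, 1; 1, 0]
      + ((ξ : ℂ) ^ 2) • D.map Complex.ofReal).det ≠ 0 := by
  rw [det_symbol hD]
  rcases eq_or_ne ξ 0 with rfl | hξ
  · simpa using hne
  · have hξ2 : 0 < ξ ^ 2 := by positivity
    exact_mod_cast Complex.add_mul_add_add_ne_zero hre (mul_pos hξ2 hD0)
      (mul_nonneg hξ2.le hD1) hξ2

theorem mulVec_integral_eq_zero_of_conservation {𝕜 n : Type*} [RCLike 𝕜] [Fintype n]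
    [DecidableEq n] {M P Q : Matrix n n 𝕜} {w F : ℝ → n → 𝕜}
    (hw : Differentiable ℝ w) (hw' : Differentiable ℝ (deriv w)) (hF : Differentiable ℝ F)
    (hint : Integrable w)
    (hw_bot : Tendsto w atBot (𝓝 0)) (hw_top : Tendsto w atTop (𝓝 0))
    (hdw_bot : Tendsto (deriv w) atBot (𝓝 0)) (hdw_top : Tendsto (deriv w) atTop (𝓝 0))
    (hF_bot : Tendsto F atBot (𝓝 0)) (hF_top : Tendsto F atTop (𝓝 0))
    (heq : ∀ x, M *ᵥ w x + deriv F x + Q *ᵥ deriv w x = P *ᵥ deriv (deriv w) x) :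
    M *ᵥ ∫ x, w x = 0 := by
  set flux : ℝ → n → 𝕜 := fun y => P *ᵥ deriv w y - F y - Q *ᵥ w y
  have hflux : ∀ x, HasDerivAt flux (M *ᵥ w x) x := fun x => by
    refine ((((hw' x).hasDerivAt.const_mulVec P).sub (hF x).hasDerivAt).sub
      ((hw x).hasDerivAt.const_mulVec Q)).congr_deriv ?_
    rw [← heq x]
    abel
  have hflux_lim : ∀ l : Filter ℝ, Tendsto w l (𝓝 0) → Tendsto (deriv w) l (𝓝 0) →
      Tendsto F l (𝓝 0) → Tendsto flux l (𝓝 0) := fun l hw hdw hF => by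
    simpa using ((hdw.const_mulVec_zero P).sub hF).sub (hw.const_mulVec_zero Q)
  rw [← integral_mulVec M hint]
  simpa using integral_of_hasDerivAt_of_tendsto hflux
    ((LinearMap.toContinuousLinearMap (toLin' M)).integrable_comp hint)
    (hflux_lim atBot hw_bot hdw_bot hF_bot) (hflux_lim atTop hw_top hdw_top hF_top)

theorem differentiable_burgersDrift (ε a : ℝ) (i : Fin 2) :
    Differentiable ℝ fun y => ![((-ε * Real.tanh (ε * y / 2) : ℝ) : ℂ), (a : ℂ)] i := by
  fin_cases i <;> simp only [Fin.zero_eta, Fin.mk_one, cons_val_zero, cons_val_one] <;> fun_prop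

theorem isBoundedUnder_norm_burgersDrift (ε a : ℝ) (l : Filter ℝ) (i : Fin 2) :
    IsBoundedUnder (· ≤ ·) l fun y => ‖![((-ε * Real.tanh (ε * y / 2) : ℝ) : ℂ), (a : ℂ)] i‖ := by
  fin_cases i <;> simp only [Fin.zero_eta, Fin.mk_one, cons_val_zero, cons_val_one]
  · refine isBoundedUnder_of ⟨|-ε|, fun y => ?_⟩
    simpa only [Complex.norm_real, Real.norm_eq_abs] using abs_mul_tanh_le (-ε) (ε * y / 2)
  · exact isBoundedUnder_const

theorem coupled_burgers_degenerate_zero_mass_general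
    (ε a : ℝ)
    (B : Fin 2 → Fin 2 → Matrix (Fin 2) (Fin 2) ℝ)
    (hBdiag : ∀ j k, (B j k).IsDiag)
    (hpar : ∃ θ > (0 : ℝ), ∀ ξ : Fin 2 → ℝ,
      θ * (ξ 0 ^ 2 + ξ 1 ^ 2) ≤ ∑ j, ∑ k, ξ j * ξ k * B j k 0 0 ∧
      0 ≤ ∑ j, ∑ k, ξ j * ξ k * B j k 1 1)
    (ξ₂ : ℝ) (lam : ℂ) (hre : 0 ≤ lam.re) (hne : ¬ (ξ₂ = 0 ∧ lam = 0))
    (w : ℝ → (Fin 2 → ℂ)) (hw : ContDiff ℝ 2 w)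
    (hwInt : ∀ i, Integrable (fun x => w x i) volume)
    (hw0 : Tendsto w atTop (nhds 0)) (hw0' : Tendsto w atBot (nhds 0))
    (hdw0 : Tendsto (deriv w) atTop (nhds 0)) (hdw0' : Tendsto (deriv w) atBot (nhds 0))
    (heq : ∀ x : ℝ,
      (lam • (1 : Matrix (Fin 2) (Fin 2) ℂ)
          + (Complex.I * (ξ₂ : ℂ)) • (!![0, 1; 1, 0] : Matrix (Fin 2) (Fin 2) ℂ)
          + ((ξ₂ : ℂ) ^ 2) • (B 1 1).map Complex.ofReal) *ᵥ w x
        + deriv (fun y =>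
            (Matrix.diagonal ![((-ε * Real.tanh (ε * y / 2) : ℝ) : ℂ), (a : ℂ)]) *ᵥ w y) x
        + (Complex.I * (ξ₂ : ℂ)) • (((B 0 1 + B 1 0).map Complex.ofReal) *ᵥ deriv w x)
        = ((B 0 0).map Complex.ofReal) *ᵥ deriv (deriv w) x) :
    (lam • (1 : Matrix (Fin 2) (Fin 2) ℂ)
        + (Complex.I * (ξ₂ : ℂ)) • (!![0, 1; 1, 0] : Matrix (Fin 2) (Fin 2) ℂ)
        + ((ξ₂ : ℂ) ^ 2) • (B 1 1).map Complex.ofReal) *ᵥ (fun i => ∫ x : ℝ, w x i) = 0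
      ∧ (fun i => ∫ x : ℝ, w x i) = 0 := by
  obtain ⟨θ, hθ, hpar⟩ := hpar
  have hb : 0 < B 1 1 0 0 := hθ.trans_le (by simpa [Fin.sum_univ_two] using (hpar ![0, 1]).1)
  have hc : 0 ≤ B 1 1 1 1 := by simpa [Fin.sum_univ_two] using (hpar ![0, 1]).2
  have hw' := hw.differentiable two_ne_zero
  have hmass : _ *ᵥ ∫ x, w x = 0 := mulVec_integral_eq_zero_of_conservation hw'
    hw.differentiable_deriv_two
    (Differentiable.diagonal_mulVec (differentiable_burgersDrift ε a) hw')
    (Integrable.of_eval hwInt) hw0' hw0 hdw0' hdw0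
    (hw0'.diagonal_mulVec_zero (isBoundedUnder_norm_burgersDrift ε a _))
    (hw0.diagonal_mulVec_zero (isBoundedUnder_norm_burgersDrift ε a _))
    fun x => by simpa only [← smul_mulVec] using heq x
  have hintegral : (fun i => ∫ x, w x i) = ∫ x, w x :=
    funext fun i => (eval_integral hwInt i).symm
  rw [hintegral]
  exact ⟨hmass, eq_zero_of_mulVec_eq_zero (det_symbol_ne_zero (hBdiag 1 1) hb hc hre hne) hmass⟩

/-- **Zero-mass property of generalized eigenfunctions of the coupled Burgers–linear
degenerate model** (equation (zeromass) in the proof of Proposition 5.3): any integrable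
generalized eigenfunction `w`, decaying together with `w'` at `±∞`, satisfies
`(λI + iξ₂A² + ξ₂²B²²) ∫ w = 0`, and consequently `∫ w = 0`. -/
theorem coupled_burgers_degenerate_zero_mass
    (ε a : ℝ) (hε : 0 < ε) (ha : 0 < a)
    (B : Fin 2 → Fin 2 → Matrix (Fin 2) (Fin 2) ℝ)
    (hBdiag : ∀ j k, (B j k).IsDiag)
    (hB11 : B 0 0 0 0 = 1)
    (hpar : ∃ θ > (0 : ℝ), ∀ ξ : Fin 2 → ℝ,
      θ * (ξ 0 ^ 2 + ξ 1 ^ 2) ≤ ∑ j, ∑ k, ξ j * ξ k * B j k 0 0 ∧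
      0 ≤ ∑ j, ∑ k, ξ j * ξ k * B j k 1 1)
    (ξ₂ : ℝ) (lam : ℂ) (hre : 0 ≤ lam.re) (hne : ¬ (ξ₂ = 0 ∧ lam = 0))
    (w : ℝ → (Fin 2 → ℂ)) (hw : ContDiff ℝ 2 w)
    (hwInt : ∀ i, Integrable (fun x => w x i) volume)
    (hw0 : Tendsto w atTop (nhds 0)) (hw0' : Tendsto w atBot (nhds 0))
    (hdw0 : Tendsto (deriv w) atTop (nhds 0)) (hdw0' : Tendsto (deriv w) atBot (nhds 0))
    (heq : ∀ x : ℝ,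
      (lam • (1 : Matrix (Fin 2) (Fin 2) ℂ)
          + (Complex.I * (ξ₂ : ℂ)) • (!![0, 1; 1, 0] : Matrix (Fin 2) (Fin 2) ℂ)
          + ((ξ₂ : ℂ) ^ 2) • (B 1 1).map Complex.ofReal) *ᵥ w x
        + deriv (fun y =>
            (Matrix.diagonal ![((-ε * Real.tanh (ε * y / 2) : ℝ) : ℂ), (a : ℂ)]) *ᵥ w y) x
        + (Complex.I * (ξ₂ : ℂ)) • (((B 0 1 + B 1 0).map Complex.ofReal) *ᵥ deriv w x)
        = ((B 0 0).map Complex.ofReal) *ᵥ deriv (deriv w) x) :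
    (lam • (1 : Matrix (Fin 2) (Fin 2) ℂ)
        + (Complex.I * (ξ₂ : ℂ)) • (!![0, 1; 1, 0] : Matrix (Fin 2) (Fin 2) ℂ)
        + ((ξ₂ : ℂ) ^ 2) • (B 1 1).map Complex.ofReal) *ᵥ (fun i => ∫ x : ℝ, w x i) = 0
      ∧ (fun i => ∫ x : ℝ, w x i) = 0 :=
  coupled_burgers_degenerate_zero_mass_general ε a B hBdiag hpar ξ₂ lam hre hne w hw hwInt hw0 hw0'
    hdw0 hdw0' heq
end

section
/- Analytic slow eigenvalue branch of the quadratic matrix pencil (Lemma 3.7, slow transverse modes): Let n ≥ 1 and A, B ∈ M_n(ℂ). Let a ∈ ℂ with a ≠ 0 be a simple eigenvalue of A (a simple root of the characteristic polynomial of A), with column eigenvector r (A r = a r) and row eigenvector l (l A = a l) normalized so that l r = 1, and set β := l B r. Then there exist r₀ > 0 and analytic maps μ : {|λ| < r₀} → ℂ and v : {|λ| < r₀} → ℂⁿ with μ(0) = 0 and v(0) = r such that ( μ(λ)² B − μ(λ) A − λ I ) v(λ) = 0 for all |λ| < r₀, and μ'(0) = −1/a, μ''(0) = 2β/a³; that is,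 μ(λ) = −λ/a + β λ²/a³ + O(λ³) as λ → 0. -/
/-!
Substituting `μ = λ ν` turns the pencil equation into `λ (λ ν² B v - ν A v - v) = 0`. Together with
the normalisation `l ⬝ᵥ v = 1`, the system `F (λ, ν, v) = (l ⬝ᵥ v - 1, λ ν² B v - ν A v - v) = 0` is
solved by `(0, -1/a, r)`, and its partial derivative in `(ν, v)` there is injective because `a` is a
simple eigenvalue: a kernel vector `(c, w)` satisfies `(A - a) w = a² c r` and `l ⬝ᵥ w = 0`, and
pairing with `l` forces `c = 0`, after which `w` is a multiple of `r` killed by `l`. The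
holomorphic implicit function theorem then gives an analytic branch `(ν(λ), v(λ))`. Pairing the
equation with `l` gives `a ν + 1 = λ ν² (l ⬝ᵥ B v)`, so `ν'(0) = β / a³`, and `μ = λ ν` has
`μ'(0) = ν(0)` and `μ''(0) = 2 ν'(0)`.
-/

open Matrix Metric Module Topology

theorem ContinuousLinearMap.isInvertible_of_injective {𝕜 E : Type*} [NontriviallyNormedField 𝕜]
    [CompleteSpace 𝕜] [NormedAddCommGroup E] [NormedSpace 𝕜 E] [FiniteDimensional 𝕜 E]
    {f : E →L[𝕜] E} (hf : Function.Injective f) : f.IsInvertible :=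
  have : CompleteSpace E := FiniteDimensional.complete 𝕜 E
  ⟨.ofBijective f (LinearMap.ker_eq_bot.mpr hf)
    (LinearMap.range_eq_top.mpr (LinearMap.injective_iff_surjective.mp hf)), rfl⟩

theorem AnalyticAt.exists_ball_implicitFunction {E₁ E₂ F : Type*}
    [NormedAddCommGroup E₁] [NormedSpace ℂ E₁] [CompleteSpace E₁]
    [NormedAddCommGroup E₂] [NormedSpace ℂ E₂] [CompleteSpace E₂]
    [NormedAddCommGroup F] [NormedSpace ℂ F] [CompleteSpace F]
    {f : E₁ × E₂ → F} {u : E₁ × E₂} {f₂ : E₂ →L[ℂ] F} (hf : AnalyticAt ℂ f u)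
    (hf₂ : HasFDerivAt (fun x ↦ f (u.1, x)) f₂ u.2) (hinv : f₂.IsInvertible) :
    ∃ ε > (0 : ℝ), ∃ ψ : E₁ → E₂, ψ u.1 = u.2 ∧
      ∀ x ∈ ball u.1 ε, AnalyticAt ℂ ψ x ∧ f (x, ψ x) = f u := by
  have hcd : ContDiffAt ℂ ⊤ f u := hf.contDiffAt
  have hpartial : fderiv ℂ f u ∘L .inr ℂ E₁ E₂ = f₂ :=
    (hf.differentiableAt.hasFDerivAt.comp u.2 (hasFDerivAt_prodMk_right u.1 u.2)).unique hf₂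
  rw [← hpartial] at hinv
  have hψ : AnalyticAt ℂ (hcd.implicitFunction (by simp) hinv) u.1 :=
    (hcd.contDiffAt_implicitFunction (by simp) hinv).analyticAt
  obtain ⟨ε, hε, hball⟩ := eventually_nhds_iff_ball.mp
    (hψ.eventually_analyticAt.and (hcd.eventually_apply_implicitFunction (by simp) hinv))
  exact ⟨ε, hε, _, hcd.implicitFunction_apply_self (by simp) hinv, hball⟩

section Derivatives

variable {𝕜 : Type*} [NontriviallyNormedField 𝕜] {f : 𝕜 → 𝕜}

theorem deriv_id_mul_at_zero (hf : DifferentiableAt 𝕜 f 0) :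
    deriv (fun t ↦ t * f t) 0 = f 0 := by
  simp [deriv_fun_mul differentiableAt_fun_id hf]

theorem deriv_deriv_id_mul_at_zero [CompleteSpace 𝕜] (hf : AnalyticAt 𝕜 f 0) :
    deriv (deriv fun t ↦ t * f t) 0 = 2 * deriv f 0 := by
  have hderiv : deriv (fun t ↦ t * f t) =ᶠ[𝓝 0] fun t ↦ f t + t * deriv f t := by
    filter_upwards [hf.eventually_analyticAt] with t ht
    simp [deriv_fun_mul differentiableAt_fun_id ht.differentiableAt]
  rw [hderiv.deriv_eq, deriv_fun_add hf.differentiableAt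
    (differentiableAt_fun_id.fun_mul hf.deriv.differentiableAt),
    deriv_id_mul_at_zero hf.deriv.differentiableAt]
  ring

end Derivatives

section SimpleEigenvalue

variable {K ι : Type*} [Field K] [Fintype ι] [DecidableEq ι] {A : Matrix ι ι K} {a : K}

theorem Matrix.exists_eq_smul_of_mulVec_eq_smul (hsimple : A.charpoly.rootMultiplicity a ≤ 1)
    {r w : ι → K} (hr0 : r ≠ 0) (hr : A *ᵥ r = a • r) (hw : A *ᵥ w = a • w) :
    ∃ c : K, w = c • r := by
  have hrmem : r ∈ Module.End.eigenspace (toLin' A) a := Module.End.mem_eigenspace_iff.mpr hr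
  have hwmem : w ∈ Module.End.eigenspace (toLin' A) a := Module.End.mem_eigenspace_iff.mpr hw
  have hle : finrank K (Module.End.eigenspace (toLin' A) a) ≤ 1 :=
    (LinearMap.finrank_eigenspace_le (toLin' A) a).trans (by rwa [charpoly_toLin'])
  have hpos : 0 < finrank K (Module.End.eigenspace (toLin' A) a) :=
    finrank_pos_iff_exists_ne_zero.mpr ⟨⟨r, hrmem⟩, by simpa using hr0⟩
  obtain ⟨c, hc⟩ := (finrank_eq_one_iff_of_nonzero' (⟨r, hrmem⟩ : Module.End.eigenspace (toLin' A) a)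
    (by simpa using hr0)).mp (le_antisymm hle hpos) ⟨w, hwmem⟩
  exact ⟨c, by simpa using congrArg Subtype.val hc.symm⟩

theorem Matrix.eq_zero_of_mulVec_sub_smul_eq_smul {l r w : ι → K} {c : K}
    (hsimple : A.charpoly.rootMultiplicity a ≤ 1)
    (hr : A *ᵥ r = a • r) (hl : l ᵥ* A = a • l) (hlr : l ⬝ᵥ r = 1)
    (hw : A *ᵥ w - a • w = c • r) (hlw : l ⬝ᵥ w = 0) : c = 0 ∧ w = 0 := by
  have hc : c = 0 := by
    have := congrArg (l ⬝ᵥ ·) hw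
    simp only [dotProduct_sub, dotProduct_smul, dotProduct_mulVec l A, hl, smul_dotProduct,
      hlr, hlw, smul_eq_mul] at this
    linear_combination -this
  refine ⟨hc, ?_⟩
  have hr0 : r ≠ 0 := by rintro rfl; simp at hlr
  obtain ⟨k, rfl⟩ := exists_eq_smul_of_mulVec_eq_smul hsimple hr0 hr
    (by rwa [hc, zero_smul, sub_eq_zero] at hw)
  rw [dotProduct_smul, hlr, smul_eq_mul, mul_one] at hlw
  rw [hlw, zero_smul]

end SimpleEigenvalue

section SlowBranchMap

variable {K ι : Type*} [Field K] [Fintype ι]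

def slowBranchMap (A B : Matrix ι ι K) (l : ι → K) (p : K × K × (ι → K)) : K × (ι → K) :=
  (l ⬝ᵥ p.2.2 - 1, (p.1 * p.2.1 ^ 2) • (B *ᵥ p.2.2) - p.2.1 • (A *ᵥ p.2.2) - p.2.2)

variable {A B : Matrix ι ι K} {l : ι → K} {lam ν : K} {v : ι → K}

theorem pencil_mulVec_eq_zero_of_slowBranchMap_eq_zero [DecidableEq ι]
    (h : slowBranchMap A B l (lam, ν, v) = 0) :
    ((lam * ν) ^ 2 • B - (lam * ν) • A - lam • (1 : Matrix ι ι K)) *ᵥ v = 0 := by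
  have h₂ : (lam * ν ^ 2) • (B *ᵥ v) - ν • (A *ᵥ v) - v = 0 := congrArg Prod.snd h
  calc _ = lam • ((lam * ν ^ 2) • (B *ᵥ v) - ν • (A *ᵥ v) - v) := by
        simp only [sub_mulVec, smul_mulVec, one_mulVec]; module
    _ = 0 := by rw [h₂, smul_zero]

theorem mul_add_one_eq_of_slowBranchMap_eq_zero {a : K} (hl : l ᵥ* A = a • l)
    (h : slowBranchMap A B l (lam, ν, v) = 0) :
    a * ν + 1 = lam * (ν ^ 2 * (l ⬝ᵥ (B *ᵥ v))) := by
  have h₁ : l ⬝ᵥ v - 1 = 0 := congrArg Prod.fst h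
  have h₂ : (lam * ν ^ 2) • (B *ᵥ v) - ν • (A *ᵥ v) - v = 0 := congrArg Prod.snd h
  have h₃ := congrArg (l ⬝ᵥ ·) h₂
  simp only [dotProduct_sub, dotProduct_smul, dotProduct_mulVec l A, hl, smul_dotProduct,
    smul_eq_mul, dotProduct_zero] at h₃
  linear_combination -h₃ - (a * ν + 1) * h₁

end SlowBranchMap

section ComplexSlowBranchMap

variable {ι : Type*} [Fintype ι] {A B : Matrix ι ι ℂ} {l : ι → ℂ}

theorem analyticAt_slowBranchMap (p : ℂ × ℂ × (ι → ℂ)) :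
    AnalyticAt ℂ (slowBranchMap A B l) p := by
  have hA : ContDiff ℂ ⊤ (A *ᵥ ·) := (mulVecLin A).toContinuousLinearMap.contDiff
  have hB : ContDiff ℂ ⊤ (B *ᵥ ·) := (mulVecLin B).toContinuousLinearMap.contDiff
  have hl : ContDiff ℂ ⊤ (l ⬝ᵥ ·) := (dotProductBilin ℂ ℂ l).toContinuousLinearMap.contDiff
  have : ContDiff ℂ ⊤ (slowBranchMap A B l) := by unfold slowBranchMap; fun_prop
  exact this.contDiffAt.analyticAt

variable (A l) in
noncomputable def slowBranchMapDeriv (ν : ℂ) (w : ι → ℂ) : ℂ × (ι → ℂ) →L[ℂ] ℂ × (ι → ℂ) :=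
  ((dotProductBilin ℂ ℂ l).toContinuousLinearMap ∘L .snd ℂ ℂ (ι → ℂ)).prod
    (-(ContinuousLinearMap.fst ℂ ℂ (ι → ℂ)).smulRight (A *ᵥ w)
      - ν • ((mulVecLin A).toContinuousLinearMap ∘L .snd ℂ ℂ (ι → ℂ)) - .snd ℂ ℂ (ι → ℂ))

theorem slowBranchMapDeriv_apply (ν : ℂ) (w : ι → ℂ) (y : ℂ × (ι → ℂ)) :
    slowBranchMapDeriv A l ν w y = (l ⬝ᵥ y.2, -(y.1 • (A *ᵥ w)) - ν • (A *ᵥ y.2) - y.2) :=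
  rfl

theorem hasFDerivAt_slowBranchMap_zero (ν : ℂ) (w : ι → ℂ) :
    HasFDerivAt (fun x ↦ slowBranchMap A B l (0, x)) (slowBranchMapDeriv A l ν w) (ν, w) := by
  have hsnd := hasFDerivAt_snd (𝕜 := ℂ) (p := (ν, w))
  have h₁ := ((dotProductBilin ℂ ℂ l).toContinuousLinearMap.hasFDerivAt.comp _ hsnd).sub_const 1
  have h₂ := (hasFDerivAt_fst.smul
    ((mulVecLin A).toContinuousLinearMap.hasFDerivAt.comp _ hsnd)).neg.sub hsnd
  have hfun : (fun x ↦ slowBranchMap A B l (0, x)) =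
      fun x ↦ (l ⬝ᵥ x.2 - 1, -(x.1 • (A *ᵥ x.2)) - x.2) := by
    funext x; simp [slowBranchMap]
  rw [hfun]
  refine (h₁.prodMk h₂).congr_fderiv ?_
  ext y <;> simp [slowBranchMapDeriv_apply]

theorem slowBranchMapDeriv_injective [DecidableEq ι] {a : ℂ} {r : ι → ℂ} (ha : a ≠ 0)
    (hsimple : A.charpoly.rootMultiplicity a ≤ 1)
    (hr : A *ᵥ r = a • r) (hl : l ᵥ* A = a • l) (hlr : l ⬝ᵥ r = 1) :
    Function.Injective (slowBranchMapDeriv A l (-a⁻¹) r) := by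
  rw [injective_iff_map_eq_zero]
  rintro ⟨c, w⟩ h
  rw [slowBranchMapDeriv_apply, Prod.mk_eq_zero] at h
  obtain ⟨hlw, hw⟩ := h
  have hw' : A *ᵥ w - a • w = (a ^ 2 * c) • r := by
    have hcancel : a • a⁻¹ • (A *ᵥ w) = A *ᵥ w := by rw [smul_smul, mul_inv_cancel₀ ha, one_smul]
    rw [hr] at hw
    linear_combination (norm := module) a • hw - hcancel
  obtain ⟨hc, rfl⟩ := eq_zero_of_mulVec_sub_smul_eq_smul hsimple hr hl hlr hw' hlw
  simp_all

theorem mul_deriv_eq_of_slowBranchMap_eq_zero {a : ℂ} {ν : ℂ → ℂ} {v : ℂ → ι → ℂ}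
    (hl : l ᵥ* A = a • l) (hν : AnalyticAt ℂ ν 0) (hv : AnalyticAt ℂ v 0)
    (h : ∀ᶠ t in 𝓝 0, slowBranchMap A B l (t, ν t, v t) = 0) :
    a * deriv ν 0 = ν 0 ^ 2 * (l ⬝ᵥ (B *ᵥ v 0)) := by
  have hlBv : DifferentiableAt ℂ (fun t ↦ l ⬝ᵥ (B *ᵥ v t)) 0 :=
    ((dotProductBilin ℂ ℂ l).toContinuousLinearMap ∘L
      (mulVecLin B).toContinuousLinearMap).differentiableAt.comp 0 hv.differentiableAt
  calc a * deriv ν 0 = deriv (fun t ↦ a * ν t + 1) 0 := by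
        rw [deriv_add_const, deriv_const_mul _ hν.differentiableAt]
    _ = deriv (fun t ↦ t * (ν t ^ 2 * (l ⬝ᵥ (B *ᵥ v t)))) 0 :=
        Filter.EventuallyEq.deriv_eq
          (h.mono fun t ht ↦ mul_add_one_eq_of_slowBranchMap_eq_zero hl ht)
    _ = _ := deriv_id_mul_at_zero ((hν.differentiableAt.pow 2).mul hlBv)

end ComplexSlowBranchMap

theorem slow_branch_matrix_pencil_general
    {n : ℕ} (A B : Matrix (Fin n) (Fin n) ℂ)
    (a : ℂ) (ha : a ≠ 0)
    (hsimple : A.charpoly.rootMultiplicity a = 1)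
    (r l : Fin n → ℂ)
    (hr : A *ᵥ r = a • r) (hl : l ᵥ* A = a • l) (hlr : l ⬝ᵥ r = 1) :
    ∃ r₀ > (0 : ℝ), ∃ (μ : ℂ → ℂ) (v : ℂ → (Fin n → ℂ)),
      (∀ lam ∈ ball (0 : ℂ) r₀, AnalyticAt ℂ μ lam ∧ AnalyticAt ℂ v lam) ∧
      μ 0 = 0 ∧ v 0 = r ∧
      (∀ lam ∈ ball (0 : ℂ) r₀,
        (μ lam ^ 2 • B - μ lam • A - lam • (1 : Matrix (Fin n) (Fin n) ℂ)) *ᵥ v lam = 0) ∧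
      deriv μ 0 = -1 / a ∧
      deriv (deriv μ) 0 = 2 * (l ⬝ᵥ (B *ᵥ r)) / a ^ 3 := by
  have hbase : slowBranchMap A B l (0, -a⁻¹, r) = 0 := by
    simp [slowBranchMap, hlr, hr, ha]
  obtain ⟨ε, hε, ψ, hψ0, hψ⟩ := (analyticAt_slowBranchMap (0, -a⁻¹, r)).exists_ball_implicitFunction
    (hasFDerivAt_slowBranchMap_zero _ _) (ContinuousLinearMap.isInvertible_of_injective
      (slowBranchMapDeriv_injective ha hsimple.le hr hl hlr))
  rw [hbase] at hψ
  have hν0 : (ψ 0).1 = -a⁻¹ := congrArg Prod.fst hψ0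
  have hν : AnalyticAt ℂ (fun t ↦ (ψ t).1) 0 := analyticAt_fst.comp (hψ 0 (mem_ball_self hε)).1
  have hv : AnalyticAt ℂ (fun t ↦ (ψ t).2) 0 := analyticAt_snd.comp (hψ 0 (mem_ball_self hε)).1
  have hν' := mul_deriv_eq_of_slowBranchMap_eq_zero hl hν hv
    (eventually_nhds_iff_ball.mpr ⟨ε, hε, fun t ht ↦ (hψ t ht).2⟩)
  refine ⟨ε, hε, fun t ↦ t * (ψ t).1, fun t ↦ (ψ t).2,
    fun t ht ↦ ⟨analyticAt_id.mul (analyticAt_fst.comp (hψ t ht).1),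
      analyticAt_snd.comp (hψ t ht).1⟩, zero_mul _,
    congrArg Prod.snd hψ0, fun t ht ↦ pencil_mulVec_eq_zero_of_slowBranchMap_eq_zero (hψ t ht).2,
    ?_, ?_⟩
  · rw [deriv_id_mul_at_zero hν.differentiableAt, hν0, neg_div, one_div]
  · rw [deriv_deriv_id_mul_at_zero hν]
    simp only [hν0, congrArg Prod.snd hψ0] at hν'
    field_simp at hν' ⊢
    linear_combination hν'

/-- **Analytic slow eigenvalue branch of the quadratic matrix pencil**
(Lemma 3.7, slow transverse modes): if `a ≠ 0` is a simple eigenvalue of `A` with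
right eigenvector `r`, left eigenvector `l`, `l ⬝ᵥ r = 1`, and `β = l B r`, then the
pencil `(μ² B - μ A - λ I) v = 0` has an analytic branch `(μ(λ), v(λ))` with
`μ(0) = 0`, `v(0) = r`, and `μ(λ) = -λ/a + β λ²/a³ + O(λ³)`. -/
theorem slow_branch_matrix_pencil
    {n : ℕ} (hn : 1 ≤ n) (A B : Matrix (Fin n) (Fin n) ℂ)
    (a : ℂ) (ha : a ≠ 0)
    (hsimple : A.charpoly.rootMultiplicity a = 1)
    (r l : Fin n → ℂ)
    (hr : A *ᵥ r = a • r) (hl : l ᵥ* A = a • l) (hlr : l ⬝ᵥ r = 1) :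
    ∃ r₀ > (0 : ℝ), ∃ (μ : ℂ → ℂ) (v : ℂ → (Fin n → ℂ)),
      (∀ lam ∈ ball (0 : ℂ) r₀, AnalyticAt ℂ μ lam ∧ AnalyticAt ℂ v lam) ∧
      μ 0 = 0 ∧ v 0 = r ∧
      (∀ lam ∈ ball (0 : ℂ) r₀,
        (μ lam ^ 2 • B - μ lam • A - lam • (1 : Matrix (Fin n) (Fin n) ℂ)) *ᵥ v lam = 0) ∧
      deriv μ 0 = -1 / a ∧
      deriv (deriv μ) 0 = 2 * (l ⬝ᵥ (B *ᵥ r)) / a ^ 3 :=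
  slow_branch_matrix_pencil_general A B a ha hsimple r l hr hl hlr
end
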